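/- A continuous map f : 𝖱 → 𝖫 from the closed long ray to the long line cannot be unbounded in both halves of 𝖫: at least one of f(𝖱) ∩ 𝖫^+ and f(𝖱) ∩ 𝖫^- is a bounded subset of the corresponding copy of 𝖱. -/

import Mathlib

noncomputable section
open Set

/-- The first uncountable ordinal `ω₁`. -/
def Omega1 : Ordinal := Ordinal.omega 1

/-- The closed long ray `𝖱`: `ω₁ × [0,1)` with the lexicographic order. -/
def LongRay : Type 1 := {o : Ordinal // o < Omega1} ×ₗ (Set.Ico (0:ℝ) 1)

instance : LinearOrder LongRay :=
  inferInstanceAs (LinearOrder ({o : Ordinal // o < Omega1} ×ₗ (Set.Ico (0:ℝ) 1)))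

/-- `𝖱` carries the order topology. -/
instance : TopologicalSpace LongRay := Preorder.topology LongRay
instance : OrderTopology LongRay := ⟨rfl⟩

lemma omega1_pos : (0 : Ordinal) < Omega1 := Ordinal.omega_pos 1

/-- The point `0 = (0,0)` of the long ray. -/
def rayZero : LongRay := toLex (⟨0, omega1_pos⟩, ⟨0, by simp⟩)

/-- Identification of the countable ordinal `o` with the point `(o,0)` of the long ray
(junk value for `o ≥ ω₁`). -/
def ordR (o : Ordinal) : LongRay :=
  if h : o < Omega1 then toLex (⟨o, h⟩, ⟨0, by simp⟩) else rayZero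

/-- The `I`-diagonal at height `c` (only the values of `c` off `I` are relevant). -/
def Delta (n : ℕ) (I : Finset (Fin n)) (c : Fin n → LongRay) : Set (Fin n → LongRay) :=
  {x | (∀ i ∈ I, ∀ i' ∈ I, x i = x i') ∧ ∀ j ∉ I, x j = c j}

/-- `f` is `I`-cofinal if `f` restricted to `Δ_I = Δ_I(0)` is unbounded. -/
def ICofinal (n : ℕ) (f : (Fin n → LongRay) → LongRay) (I : Finset (Fin n)) : Prop :=
  ¬ BddAbove (f '' Delta n I (fun _ => rayZero))

/-- The cofinality class `𝔠(f) = {I : f is I-cofinal}`. -/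
def cofClass (n : ℕ) (f : (Fin n → LongRay) → LongRay) : Set (Finset (Fin n)) :=
  {I | ICofinal n f I}

/-- `M_I(c) = {x : x_i ≥ c for all i ∈ I}`. -/
def MSet (n : ℕ) (I : Finset (Fin n)) (c : LongRay) : Set (Fin n → LongRay) :=
  {x | ∀ i ∈ I, c ≤ x i}

/-- `E_I(b,d) = {x ∈ M_I(d) : x_j = b_j for all j ∉ I}`. -/
def ESet (n : ℕ) (I : Finset (Fin n)) (b : Fin n → LongRay) (d : LongRay) :
    Set (Fin n → LongRay) :=
  {x | (∀ i ∈ I, d ≤ x i) ∧ ∀ j ∉ I, x j = b j}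

/-- The long line `𝖫`: two copies of the long ray glued at `0` (a reversed copy
followed by a direct copy, with the two zeros identified), with the order topology. -/
def LongLine : Type 1 :=
  {x : LongRayᵒᵈ ⊕ₗ LongRay // x ≠ toLex (Sum.inl (OrderDual.toDual rayZero))}

instance : LinearOrder LongLine :=
  inferInstanceAs (LinearOrder
    {x : LongRayᵒᵈ ⊕ₗ LongRay // x ≠ toLex (Sum.inl (OrderDual.toDual rayZero))})

instance : TopologicalSpace LongLine := Preorder.topology LongLine
instance : OrderTopology LongLine := ⟨rfl⟩

/-- The glueing point `0` of the long line. -/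
def longZero : LongLine :=
  ⟨toLex (Sum.inr rayZero), by simp⟩

/-!
If both halves of the image were unbounded, then for some `p > 0` the closed sets `f⁻¹[p, ∞)`
and `f⁻¹(-∞, 0]` would both be unbounded in `𝖱`: a bounded preimage confines the rest of the
image to the image of an interval `[0, z]`, which is compact because `𝖱` is conditionally
complete. Choosing points alternately from the two
sets gives an increasing sequence; it is bounded because `ω₁` has uncountable cofinality, so it
converges to a point lying in both closed sets, which are disjoint.
-/

open Set Filter Topology

theorem IsClosed.inter_nonempty_of_not_bddAbove {X : Type*} [ConditionallyCompleteLinearOrder X]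
    [TopologicalSpace X] [OrderTopology X] [Nonempty X]
    (hseq : ∀ u : ℕ → X, BddAbove (range u)) {A B : Set X} (hA : IsClosed A) (hB : IsClosed B)
    (hA' : ¬BddAbove A) (hB' : ¬BddAbove B) : (A ∩ B).Nonempty := by
  choose gA hgA hltA using not_bddAbove_iff.1 hA'
  choose gB hgB hltB using not_bddAbove_iff.1 hB'
  obtain ⟨x₀⟩ := ‹Nonempty X›
  set a : ℕ → X := fun n => (gA ∘ gB)^[n] (gA x₀)
  have ha_succ (n : ℕ) : a (n + 1) = gA (gB (a n)) :=
    Function.iterate_succ_apply' (gA ∘ gB) n (gA x₀)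
  have ha_le (n : ℕ) : a n ≤ gB (a n) := (hltB _).le
  have hb_le (n : ℕ) : gB (a n) ≤ a (n + 1) := ha_succ n ▸ (hltA _).le
  have ha_mono : Monotone a := monotone_nat_of_le_succ fun n => (ha_le n).trans (hb_le n)
  have ha_lim : Tendsto a atTop (𝓝 (⨆ n, a n)) := tendsto_atTop_ciSup ha_mono (hseq a)
  have hb_lim : Tendsto (fun n => gB (a n)) atTop (𝓝 (⨆ n, a n)) :=
    tendsto_of_tendsto_of_tendsto_of_le_of_le ha_lim ((tendsto_add_atTop_iff_nat 1).2 ha_lim)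
      ha_le hb_le
  refine ⟨⨆ n, a n, hA.mem_of_tendsto ha_lim (Eventually.of_forall fun n => ?_),
    hB.mem_of_tendsto hb_lim (Eventually.of_forall fun n => hgB _)⟩
  cases n with
  | zero => exact hgA x₀
  | succ n => exact ha_succ n ▸ hgA _

theorem Continuous.bddAbove_range_of_bddAbove_preimage_Ici {X Y : Type*} [LinearOrder X]
    [OrderBot X] [TopologicalSpace X] [CompactIccSpace X] [LinearOrder Y] [TopologicalSpace Y]
    [OrderClosedTopology Y] {f : X → Y} (hf : Continuous f) {p : Y}
    (h : BddAbove (f ⁻¹' Ici p)) : BddAbove (range f) := by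
  obtain ⟨z, hz⟩ := h
  have : Nonempty Y := ⟨p⟩
  obtain ⟨c, hc⟩ := (isCompact_Icc (a := ⊥) (b := z)).image hf |>.bddAbove
  refine ⟨max c p, ?_⟩
  rintro _ ⟨x, rfl⟩
  by_cases hx : p ≤ f x
  · exact le_max_of_le_left (hc ⟨x, ⟨bot_le, hz hx⟩, rfl⟩)
  · exact le_max_of_le_right (not_le.1 hx).le

theorem Continuous.bddBelow_range_of_bddAbove_preimage_Iic {X Y : Type*} [LinearOrder X]
    [OrderBot X] [TopologicalSpace X] [CompactIccSpace X] [LinearOrder Y] [TopologicalSpace Y]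
    [OrderClosedTopology Y] {f : X → Y} (hf : Continuous f) {p : Y}
    (h : BddAbove (f ⁻¹' Iic p)) : BddBelow (range f) :=
  Continuous.bddAbove_range_of_bddAbove_preimage_Ici (Y := Yᵒᵈ) hf h

namespace LongRay

def fst (x : LongRay) : Ordinal := (ofLex x).1

def snd (x : LongRay) : ℝ := (ofLex x).2

def mk (o : Ordinal) (ho : o < Omega1) (r : ℝ) (hr : r ∈ Ico (0 : ℝ) 1) : LongRay :=
  toLex (⟨o, ho⟩, ⟨r, hr⟩)

lemma fst_lt_omega1 (x : LongRay) : fst x < Omega1 := (ofLex x).1.2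

lemma snd_mem_Ico (x : LongRay) : snd x ∈ Ico (0 : ℝ) 1 := (ofLex x).2.2

lemma le_iff {x y : LongRay} : x ≤ y ↔ fst x < fst y ∨ fst x = fst y ∧ snd x ≤ snd y :=
  Prod.Lex.le_iff.trans (or_congr Iff.rfl (and_congr Subtype.ext_iff Iff.rfl))

lemma fst_mono : Monotone fst := fun _ _ h => by
  rcases le_iff.1 h with h | h
  exacts [h.le, h.1.le]

instance : OrderBot LongRay where
  bot := rayZero
  bot_le x :=
    le_iff.2 <| (show 0 ≤ fst x from zero_le).lt_or_eq.imp id fun h => ⟨h, (snd_mem_Ico x).1⟩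

/-- The least upper bound of `S` sits on the first ordinal level `γ` reached by upper bounds,
at the infimum of the real coordinates of the upper bounds on that level. -/
lemma exists_isLUB {S : Set LongRay} (hS : BddAbove S) : ∃ x, IsLUB S x := by
  set γ := sInf (fst '' upperBounds S)
  obtain ⟨u₀, hu₀, hu₀γ⟩ : γ ∈ fst '' upperBounds S := csInf_mem (hS.image fst)
  set R := snd '' {u ∈ upperBounds S | fst u = γ}
  have hR_ne : R.Nonempty := ⟨_, u₀, ⟨hu₀, hu₀γ⟩, rfl⟩
  have hR_nonneg : ∀ r ∈ R, 0 ≤ r := by rintro _ ⟨u, -, rfl⟩; exact (snd_mem_Ico u).1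
  have hR_bdd : BddBelow R := ⟨0, hR_nonneg⟩
  have hρ : sInf R ∈ Ico (0 : ℝ) 1 := ⟨le_csInf hR_ne hR_nonneg,
    (csInf_le hR_bdd ⟨u₀, ⟨hu₀, hu₀γ⟩, rfl⟩).trans_lt (snd_mem_Ico u₀).2⟩
  refine ⟨mk γ (hu₀γ ▸ fst_lt_omega1 u₀) (sInf R) hρ, fun x hx => ?_, fun b hb => ?_⟩
  · rcases (hu₀γ ▸ fst_mono (hu₀ hx)).lt_or_eq with hlt | heq
    · exact le_iff.2 (Or.inl hlt)
    refine le_iff.2 (Or.inr ⟨heq, le_csInf hR_ne ?_⟩)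
    rintro _ ⟨u, ⟨hu, huγ⟩, rfl⟩
    rcases le_iff.1 (hu hx) with hlt | h
    · exact absurd hlt (by rw [heq, huγ]; exact lt_irrefl _)
    · exact h.2
  · rcases (csInf_le' ⟨b, hb, rfl⟩ : γ ≤ fst b).lt_or_eq with hlt | heq
    · exact le_iff.2 (Or.inl hlt)
    · exact le_iff.2 (Or.inr ⟨heq, csInf_le hR_bdd ⟨b, ⟨hb, heq.symm⟩, rfl⟩⟩)

open Classical in
noncomputable instance : SupSet LongRay :=
  ⟨fun S => if h : BddAbove S ∧ S.Nonempty then (exists_isLUB h.1).choose else ⊥⟩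

open Classical in
noncomputable instance : ConditionallyCompleteLinearOrder LongRay where
  __ := (inferInstance : LinearOrder LongRay)
  __ := conditionallyCompleteLatticeOfLatticeOfsSup LongRay fun S hB hne => by
    change IsLUB S (if h : BddAbove S ∧ S.Nonempty then (exists_isLUB h.1).choose else ⊥)
    rw [dif_pos ⟨hB, hne⟩]
    exact (exists_isLUB hB).choose_spec
  csSup_of_not_bddAbove S h := by
    change (if h : BddAbove S ∧ S.Nonempty then (exists_isLUB h.1).choose else ⊥) =
      (if h : BddAbove ∅ ∧ (∅ : Set LongRay).Nonempty then (exists_isLUB h.1).choose else ⊥)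
    rw [dif_neg (fun h' => h h'.1), dif_neg (fun h' => Set.not_nonempty_empty h'.2)]
  csInf_of_not_bddBelow S h := (h (OrderBot.bddBelow S)).elim

lemma bddAbove_range (u : ℕ → LongRay) : BddAbove (range u) := by
  have hsucc (n : ℕ) : Order.succ (fst (u n)) < Omega1 :=
    (Cardinal.isSuccLimit_omega 1).succ_lt (fst_lt_omega1 (u n))
  refine ⟨mk _ (Ordinal.iSup_lt_omega_one hsucc) 0 (by simp), ?_⟩
  rintro _ ⟨n, rfl⟩
  refine le_iff.2 (Or.inl ((Order.lt_succ (fst (u n))).trans_le ?_))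
  exact Ordinal.le_iSup (fun n => Order.succ (fst (u n))) n

end LongRay

/-- a continuous `f : 𝖱 → 𝖫` cannot be unbounded in both halves of `𝖫`:
its image is bounded in `𝖫⁺ = [0,∞)` or bounded in `𝖫⁻ = (-∞,0]` (in the reversed
order of the negative copy, i.e. bounded below). -/
theorem not_unbounded_both_sides (f : LongRay → LongLine) (hf : Continuous f) :
    BddAbove {y | y ∈ Set.range f ∧ longZero ≤ y} ∨
    BddBelow {y | y ∈ Set.range f ∧ y ≤ longZero} := by
  by_contra! ⟨hpos, hneg⟩
  obtain ⟨p, -, hp⟩ := not_bddAbove_iff.1 hpos longZero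
  have hA : ¬BddAbove (f ⁻¹' Ici p) := fun h =>
    hpos ((hf.bddAbove_range_of_bddAbove_preimage_Ici h).mono fun _ hy => hy.1)
  have hB : ¬BddAbove (f ⁻¹' Iic longZero) := fun h =>
    hneg ((hf.bddBelow_range_of_bddAbove_preimage_Iic h).mono fun _ hy => hy.1)
  obtain ⟨x, hxA, hxB⟩ := (isClosed_Ici.preimage hf).inter_nonempty_of_not_bddAbove
    LongRay.bddAbove_range (isClosed_Iic.preimage hf) hA hB
  exact (hp.trans_le hxA).not_ge hxB
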